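/- arXiv:1901.01099 — 2 statements merged into one kernel-verified Lean document; each statement's English description precedes it below -/
import Mathlib

section
/- For all natural numbers n, m ≥ 2, every λ ∈ [−1,1] and every (x,y) ∈ [0,1]×[0,1], the bivariate λ-Bernstein operator satisfies: B̄_{n,m}(1; x,y; λ) = 1; B̄_{n,m}(s; x,y; λ) = x + λ(1 − 2x + x^{n+1} − (1−x)^{n+1})/(n(n−1)); and B̄_{n,m}(t; x,y; λ) = y + λ(1 − 2y + y^{m+1} − (1−y)^{m+1})/(m(m−1)), where s and t denote the coordinate projections (s,t) ↦ s and (s,t) ↦ t. -/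
open Finset Filter

/-- Bernstein basis polynomial `b_{n,i}(x) = C(n,i) x^i (1-x)^(n-i)`. -/
noncomputable def bern (n i : ℕ) (x : ℝ) : ℝ :=
  (n.choose i : ℝ) * x ^ i * (1 - x) ^ (n - i)

/-- Bézier basis `b̃_{n,i}(λ; x)` with shape parameter `lam`. -/
noncomputable def bez (n : ℕ) (lam x : ℝ) (i : ℕ) : ℝ :=
  if i = 0 then bern n 0 x - lam / ((n : ℝ) + 1) * bern (n + 1) 1 x
  else if i = n then bern n n x - lam / ((n : ℝ) + 1) * bern (n + 1) n x
  else bern n i x + lam * (((n : ℝ) - 2 * (i : ℝ) + 1) / ((n : ℝ) ^ 2 - 1) * bern (n + 1) i x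
    - ((n : ℝ) - 2 * (i : ℝ) - 1) / ((n : ℝ) ^ 2 - 1) * bern (n + 1) (i + 1) x)

/-- The λ-Bernstein operator `B_{n,λ}(f; x) = ∑_{i=0}^n f(i/n) b̃_{n,i}(λ; x)`. -/
noncomputable def lB (n : ℕ) (lam : ℝ) (f : ℝ → ℝ) (x : ℝ) : ℝ :=
  ∑ i ∈ Finset.range (n + 1), f ((i : ℝ) / (n : ℝ)) * bez n lam x i

/-- The bivariate λ-Bernstein operator
`B̄_{n,m}(f; x, y; λ) = ∑_{k₁=0}^n ∑_{k₂=0}^m f(k₁/n, k₂/m) b̃_{n,k₁}(λ;x) b̃_{m,k₂}(λ;y)`. -/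
noncomputable def bivB (n m : ℕ) (lam : ℝ) (f : ℝ → ℝ → ℝ) (x y : ℝ) : ℝ :=
  ∑ k₁ ∈ Finset.range (n + 1), ∑ k₂ ∈ Finset.range (m + 1),
    f ((k₁ : ℝ) / (n : ℝ)) ((k₂ : ℝ) / (m : ℝ)) * bez n lam x k₁ * bez m lam y k₂

lemma bern_eq_eval (n i : ℕ) (x : ℝ) :
    bern n i x = (bernsteinPolynomial ℝ n i).eval x := by
  simp [bern, bernsteinPolynomial]

lemma sum_bern (N : ℕ) (x : ℝ) : ∑ i ∈ Finset.range (N + 1), bern N i x = 1 := by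
  have h := bernsteinPolynomial.sum ℝ N
  have := congrArg (Polynomial.eval x) h
  simpa [Polynomial.eval_finset_sum, bern_eq_eval] using this

lemma sum_i_bern (N : ℕ) (x : ℝ) :
    ∑ i ∈ Finset.range (N + 1), (i : ℝ) * bern N i x = N * x := by
  have h := bernsteinPolynomial.sum_smul ℝ N
  have := congrArg (Polynomial.eval x) h
  simpa [Polynomial.eval_finset_sum, bern_eq_eval, mul_comm] using this

noncomputable def Dfun (n : ℕ) (x : ℝ) (i : ℕ) : ℝ :=
  ((n : ℝ) - 2 * (i : ℝ) + 1) / ((n : ℝ) ^ 2 - 1) * bern (n + 1) i x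

noncomputable def Efun (n : ℕ) (x : ℝ) (i : ℕ) : ℝ :=
  if 1 ≤ i ∧ i ≤ n then Dfun n x i else 0

lemma Efun_zero (n : ℕ) (x : ℝ) : Efun n x 0 = 0 := by simp [Efun]

lemma Efun_top (n : ℕ) (x : ℝ) : Efun n x (n + 1) = 0 := by
  simp only [Efun, if_neg (by omega : ¬(1 ≤ n + 1 ∧ n + 1 ≤ n))]

lemma Efun_of (n : ℕ) (x : ℝ) (i : ℕ) (h1 : 1 ≤ i) (h2 : i ≤ n) :
    Efun n x i = Dfun n x i := if_pos ⟨h1, h2⟩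

lemma bez_eq (n : ℕ) (hn : 2 ≤ n) (lam x : ℝ) (i : ℕ) (hi : i ≤ n) :
    bez n lam x i = bern n i x + lam * (Efun n x i - Efun n x (i + 1)) := by
  have hn1 : ((n : ℝ) + 1) ≠ 0 := by positivity
  have h2 : (2 : ℝ) ≤ (n : ℝ) := by exact_mod_cast hn
  have hnm1 : ((n : ℝ) - 1) ≠ 0 := by nlinarith
  have hsq : ((n : ℝ) ^ 2 - 1) ≠ 0 := by
    have : (n : ℝ) ^ 2 - 1 = ((n : ℝ) - 1) * ((n : ℝ) + 1) := by ring
    rw [this]; exact mul_ne_zero hnm1 hn1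
  rcases eq_or_ne i 0 with rfl | h0
  · rw [Efun_zero, Efun_of n x 1 le_rfl (by omega), Dfun]
    simp only [bez, if_pos rfl]
    push_cast
    field_simp
    ring
  rcases eq_or_ne i n with rfl | hN
  · rw [Efun_top, Efun_of i x i (by omega) le_rfl, Dfun]
    simp only [bez, if_neg h0, if_pos rfl]
    push_cast
    field_simp
    ring
  · rw [Efun_of n x i (by omega) hi, Efun_of n x (i + 1) (by omega) (by omega), Dfun, Dfun]
    simp only [bez, if_neg h0, if_neg hN]
    push_cast
    ring

lemma lB_one (n : ℕ) (hn : 2 ≤ n) (lam x : ℝ) : lB n lam (fun _ => 1) x = 1 := by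
  unfold lB
  rw [Finset.sum_congr rfl (fun i hi => by
    rw [bez_eq n hn lam x i (by simpa using Nat.lt_succ_iff.mp (Finset.mem_range.mp hi))])]
  simp only [one_mul]
  rw [Finset.sum_add_distrib, sum_bern, ← Finset.mul_sum,
    Finset.sum_range_sub' (fun i => Efun n x i) (n + 1), Efun_zero, Efun_top]
  ring

lemma lB_id (n : ℕ) (hn : 2 ≤ n) (lam x : ℝ) :
    lB n lam (fun u => u) x =
      x + lam * (1 - 2 * x + x ^ (n + 1) - (1 - x) ^ (n + 1)) / ((n : ℝ) * ((n : ℝ) - 1)) := by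
  have hnne : (n : ℝ) ≠ 0 := by positivity
  have hn1 : ((n : ℝ) + 1) ≠ 0 := by positivity
  have h2 : (2 : ℝ) ≤ (n : ℝ) := by exact_mod_cast hn
  have hnm1 : ((n : ℝ) - 1) ≠ 0 := by nlinarith
  have hsq : ((n : ℝ) ^ 2 - 1) ≠ 0 := by
    have : (n : ℝ) ^ 2 - 1 = ((n : ℝ) - 1) * ((n : ℝ) + 1) := by ring
    rw [this]; exact mul_ne_zero hnm1 hn1
  -- sum of Dfun over range (n+2)
  have hD : ∑ j ∈ Finset.range (n + 2), Dfun n x j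
      = (((n : ℝ) + 1) * 1 - 2 * (((n : ℝ) + 1) * x)) / ((n : ℝ) ^ 2 - 1) := by
    have h1 := sum_bern (n + 1) x
    have h2' := sum_i_bern (n + 1) x
    push_cast at h2'
    calc ∑ j ∈ Finset.range (n + 2), Dfun n x j
        = (((n : ℝ) + 1) * ∑ j ∈ Finset.range (n + 2), bern (n + 1) j x
          - 2 * ∑ j ∈ Finset.range (n + 2), (j : ℝ) * bern (n + 1) j x) / ((n : ℝ) ^ 2 - 1) := by
          rw [Finset.mul_sum, Finset.mul_sum, ← Finset.sum_sub_distrib, Finset.sum_div]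
          refine Finset.sum_congr rfl fun j hj => ?_
          unfold Dfun
          field_simp
          ring
      _ = _ := by rw [h1, h2']
  -- T = ∑_{i ∈ range (n+1)} Efun n x (i+1)
  have hT : ∑ i ∈ Finset.range (n + 1), Efun n x (i + 1)
      = (((n : ℝ) + 1) * (1 - 2 * x) - ((n : ℝ) + 1) * (1 - x) ^ (n + 1)
        + ((n : ℝ) + 1) * x ^ (n + 1)) / ((n : ℝ) ^ 2 - 1) := by
    have e1 : ∑ i ∈ Finset.range (n + 1), Efun n x (i + 1)
        = ∑ i ∈ Finset.range n, Dfun n x (i + 1) := by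
      rw [Finset.sum_range_succ, Efun_top, add_zero]
      refine Finset.sum_congr rfl fun i hi => ?_
      exact Efun_of n x (i + 1) (by omega) (by have := Finset.mem_range.mp hi; omega)
    have e2 : ∑ j ∈ Finset.range (n + 2), Dfun n x j
        = (∑ i ∈ Finset.range (n + 1), Dfun n x (i + 1)) + Dfun n x 0 :=
      Finset.sum_range_succ' (fun j => Dfun n x j) (n + 1)
    rw [Finset.sum_range_succ] at e2
    have hD0 : Dfun n x 0 = ((n : ℝ) + 1) / ((n : ℝ) ^ 2 - 1) * (1 - x) ^ (n + 1) := by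
      simp [Dfun, bern]
    have hDtop : Dfun n x (n + 1)
        = ((n : ℝ) - 2 * ((n : ℝ) + 1) + 1) / ((n : ℝ) ^ 2 - 1) * x ^ (n + 1) := by
      simp [Dfun, bern]
    rw [e1]
    have e4 : ∑ j ∈ Finset.range (n + 2), Dfun n x j
        = ∑ j ∈ Finset.range (n + 1), Dfun n x j + Dfun n x (n + 1) :=
      Finset.sum_range_succ _ _
    have : ∑ i ∈ Finset.range n, Dfun n x (i + 1)
        = ∑ j ∈ Finset.range (n + 2), Dfun n x j - Dfun n x 0 - Dfun n x (n + 1) := by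
      have e5 : ∑ i ∈ Finset.range (n + 1), Dfun n x (i + 1)
          = ∑ i ∈ Finset.range n, Dfun n x (i + 1) + Dfun n x (n + 1) :=
        Finset.sum_range_succ _ _
      linarith [e2, e4, e5]
    rw [this, hD, hD0, hDtop]
    field_simp
    ring
  unfold lB
  rw [Finset.sum_congr rfl (fun i hi => by
    rw [bez_eq n hn lam x i (by simpa using Nat.lt_succ_iff.mp (Finset.mem_range.mp hi))])]
  have step : ∀ i ∈ Finset.range (n + 1),
      (i : ℝ) / (n : ℝ) * (bern n i x + lam * (Efun n x i - Efun n x (i + 1)))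
      = (i : ℝ) * bern n i x / (n : ℝ)
        + (lam * ((i : ℝ) / (n : ℝ) * Efun n x i
            - ((i : ℝ) + 1) / (n : ℝ) * Efun n x (i + 1))
          + lam / (n : ℝ) * Efun n x (i + 1)) := by
    intro i hi
    field_simp
    ring
  rw [Finset.sum_congr rfl step, Finset.sum_add_distrib, ← Finset.sum_div, sum_i_bern,
    Finset.sum_add_distrib, ← Finset.mul_sum, ← Finset.mul_sum]
  have tel : ∑ i ∈ Finset.range (n + 1),
      ((i : ℝ) / (n : ℝ) * Efun n x i - ((i : ℝ) + 1) / (n : ℝ) * Efun n x (i + 1)) = 0 := by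
    calc ∑ i ∈ Finset.range (n + 1),
        ((i : ℝ) / (n : ℝ) * Efun n x i - ((i : ℝ) + 1) / (n : ℝ) * Efun n x (i + 1))
        = ∑ i ∈ Finset.range (n + 1),
          ((fun (j : ℕ) => (j : ℝ) / (n : ℝ) * Efun n x j) i
            - (fun (j : ℕ) => (j : ℝ) / (n : ℝ) * Efun n x j) (i + 1)) := by
          refine Finset.sum_congr rfl fun i _ => ?_
          push_cast; ring
      _ = 0 := by
          rw [Finset.sum_range_sub']
          simp [Efun_zero, Efun_top]
  rw [tel, hT]
  field_simp
  ring

/-- the bivariate λ-Bernstein operator on the test functions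
`1`, `(s,t) ↦ s` and `(s,t) ↦ t`. -/
theorem bivB_test_functions (n m : ℕ) (hn : 2 ≤ n) (hm : 2 ≤ m) (lam : ℝ)
    (hlam : lam ∈ Set.Icc (-1 : ℝ) 1) (x y : ℝ)
    (hx : x ∈ Set.Icc (0 : ℝ) 1) (hy : y ∈ Set.Icc (0 : ℝ) 1) :
    bivB n m lam (fun _ _ => 1) x y = 1 ∧
    bivB n m lam (fun s _ => s) x y =
      x + lam * (1 - 2 * x + x ^ (n + 1) - (1 - x) ^ (n + 1)) / ((n : ℝ) * ((n : ℝ) - 1)) ∧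
    bivB n m lam (fun _ t => t) x y =
      y + lam * (1 - 2 * y + y ^ (m + 1) - (1 - y) ^ (m + 1)) / ((m : ℝ) * ((m : ℝ) - 1)) := by
  have sum_bez : ∀ (N : ℕ), 2 ≤ N → ∀ z : ℝ,
      ∑ i ∈ Finset.range (N + 1), bez N lam z i = 1 := by
    intro N hN z
    have h := lB_one N hN lam z
    unfold lB at h
    simpa using h
  refine ⟨?_, ?_, ?_⟩
  · calc bivB n m lam (fun _ _ => 1) x y
        = ∑ k₁ ∈ Finset.range (n + 1),
            bez n lam x k₁ * ∑ k₂ ∈ Finset.range (m + 1), bez m lam y k₂ := by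
          unfold bivB
          refine Finset.sum_congr rfl fun k₁ _ => ?_
          rw [Finset.mul_sum]
          all_goals exact Finset.sum_congr rfl fun k₂ _ => by ring
      _ = 1 := by
          rw [Finset.sum_congr rfl fun k₁ _ => by rw [sum_bez m hm y]]
          simpa using sum_bez n hn x
  · calc bivB n m lam (fun s _ => s) x y
        = ∑ k₁ ∈ Finset.range (n + 1),
            ((k₁ : ℝ) / (n : ℝ) * bez n lam x k₁)
              * ∑ k₂ ∈ Finset.range (m + 1), bez m lam y k₂ := by
          unfold bivB
          refine Finset.sum_congr rfl fun k₁ _ => ?_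
          rw [Finset.mul_sum]
          all_goals exact Finset.sum_congr rfl fun k₂ _ => by ring
      _ = lB n lam (fun u => u) x := by
          unfold lB
          refine Finset.sum_congr rfl fun k₁ _ => ?_
          rw [sum_bez m hm y]
          ring
      _ = _ := lB_id n hn lam x
  · calc bivB n m lam (fun _ t => t) x y
        = ∑ k₁ ∈ Finset.range (n + 1),
            bez n lam x k₁
              * ∑ k₂ ∈ Finset.range (m + 1), (k₂ : ℝ) / (m : ℝ) * bez m lam y k₂ := by
          unfold bivB
          refine Finset.sum_congr rfl fun k₁ _ => ?_
          rw [Finset.mul_sum]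
          all_goals exact Finset.sum_congr rfl fun k₂ _ => by ring
      _ = lB m lam (fun u => u) y := by
          have h : ∑ k₂ ∈ Finset.range (m + 1), (k₂ : ℝ) / (m : ℝ) * bez m lam y k₂
              = lB m lam (fun u => u) y := by unfold lB; rfl
          rw [Finset.sum_congr rfl fun k₁ _ => by rw [h], ← Finset.sum_mul,
            sum_bez n hn x, one_mul]
      _ = _ := lB_id m hm lam y
end

section
/- Let λ ∈ [−1,1] and let f be continuous on I = [0,1]×[0,1]. Then the sequence of bivariate λ-Bernstein operators B̄_{n,m}(f; x,y; λ) converges uniformly to f(x,y) on I as n, m → ∞; that is, for every ε > 0 there exists N such that for all n, m ≥ N and all (x,y) ∈ I, |B̄_{n,m}(f; x,y; λ) − f(x,y)| < ε. -/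
open Finset Filter

lemma bern_nonneg {n i : ℕ} {x : ℝ} (hx : x ∈ Set.Icc (0:ℝ) 1) : 0 ≤ bern n i x := by
  unfold bern
  have h1 : (0:ℝ) ≤ 1 - x := by linarith [hx.2]
  have h0 := hx.1
  positivity

lemma bern_sum (n : ℕ) (x : ℝ) : ∑ i ∈ range (n+1), bern n i x = 1 := by
  have h := add_pow x (1-x) n
  simp only [add_sub_cancel, one_pow] at h
  rw [h]
  refine Finset.sum_congr rfl fun i _ => ?_
  unfold bern; ring

lemma bern_eval (n i : ℕ) (x : ℝ) : (bernsteinPolynomial ℝ n i).eval x = bern n i x := by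
  simp [bernsteinPolynomial, bern]

lemma bern_variance (n : ℕ) (hn : 0 < n) (x : ℝ) :
    ∑ i ∈ range (n+1), ((i:ℝ)/n - x)^2 * bern n i x = x*(1-x)/n := by
  have h := bernsteinPolynomial.variance (R := ℝ) n
  have h2 := congrArg (Polynomial.eval x) h
  simp only [Polynomial.eval_finset_sum, Polynomial.eval_mul, Polynomial.eval_pow,
    Polynomial.eval_sub, Polynomial.eval_smul, Polynomial.eval_X, Polynomial.eval_natCast,
    Polynomial.eval_one, bern_eval, smul_eq_mul, nsmul_eq_mul] at h2
  have hn' : (n:ℝ) ≠ 0 := Nat.cast_ne_zero.mpr hn.ne'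
  have : ∑ i ∈ range (n+1), ((i:ℝ)/n - x)^2 * bern n i x
      = (1/(n:ℝ)^2) * ∑ i ∈ range (n+1), ((n:ℝ)*x - i)^2 * bern n i x := by
    rw [Finset.mul_sum]
    refine Finset.sum_congr rfl fun i _ => ?_
    have : ((i:ℝ)/n - x)^2 = (1/(n:ℝ)^2) * ((n:ℝ)*x - i)^2 := by
      field_simp; ring
    rw [this, mul_assoc]
  rw [this, h2]
  field_simp

lemma bez_sub_bern_abs {n : ℕ} (hn : 2 ≤ n) {lam x : ℝ} (hlam : |lam| ≤ 1)
    (hx : x ∈ Set.Icc (0:ℝ) 1) {i : ℕ} (hi : i ≤ n) :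
    |bez n lam x i - bern n i x| ≤ (1/((n:ℝ)+1)) * (bern (n+1) i x + bern (n+1) (i+1) x) := by
  have hnR : (2:ℝ) ≤ (n:ℝ) := by exact_mod_cast hn
  have hn1 : (0:ℝ) < (n:ℝ) + 1 := by linarith
  have hb1 : 0 ≤ bern (n+1) i x := bern_nonneg hx
  have hb2 : 0 ≤ bern (n+1) (i+1) x := bern_nonneg hx
  unfold bez
  by_cases h0 : i = 0
  · subst h0
    simp only [if_pos rfl, if_true]
    rw [sub_sub_cancel_left, abs_neg, abs_mul, abs_div, abs_of_pos hn1, abs_of_nonneg hb2]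
    have hfrac : |lam| / ((n:ℝ)+1) ≤ 1/((n:ℝ)+1) := by gcongr
    calc |lam| / ((n:ℝ)+1) * bern (n+1) 1 x ≤ 1/((n:ℝ)+1) * bern (n+1) 1 x := by
          exact mul_le_mul_of_nonneg_right hfrac hb2
      _ ≤ 1/((n:ℝ)+1) * (bern (n+1) 0 x + bern (n+1) 1 x) := by
          have := bern_nonneg (n := n+1) (i := 0) hx
          have h1n : (0:ℝ) < 1/((n:ℝ)+1) := by positivity
          nlinarith
  · by_cases hn0 : i = n
    · subst hn0
      simp only [if_neg h0, if_pos rfl, if_true]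
      rw [sub_sub_cancel_left, abs_neg, abs_mul, abs_div, abs_of_pos hn1, abs_of_nonneg hb1]
      have hfrac : |lam| / ((i:ℝ)+1) ≤ 1/((i:ℝ)+1) := by gcongr
      have h1n : (0:ℝ) < 1/((i:ℝ)+1) := by positivity
      nlinarith [mul_le_mul_of_nonneg_right hfrac hb1, mul_nonneg h1n.le hb2]
    · simp only [if_neg h0, if_neg hn0]
      rw [add_sub_cancel_left, abs_mul]
      have hi1 : 1 ≤ i := Nat.one_le_iff_ne_zero.mpr h0
      have hi2 : i ≤ n - 1 := by omega
      have hiR1 : (1:ℝ) ≤ (i:ℝ) := by exact_mod_cast hi1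
      have hiR2 : (i:ℝ) ≤ (n:ℝ) - 1 := by
        have : (i:ℝ) ≤ ((n-1 : ℕ):ℝ) := by exact_mod_cast hi2
        have : ((n-1:ℕ):ℝ) = (n:ℝ) - 1 := by
          have : (1:ℕ) ≤ n := by omega
          push_cast [Nat.cast_sub this]; ring
        linarith [show (i:ℝ) ≤ ((n-1:ℕ):ℝ) from by exact_mod_cast hi2]
      have hden : (0:ℝ) < (n:ℝ)^2 - 1 := by nlinarith
      have hc1 : |((n:ℝ) - 2*i + 1) / ((n:ℝ)^2 - 1)| ≤ 1/((n:ℝ)+1) := by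
        rw [abs_div, abs_of_pos hden, div_le_div_iff₀ hden hn1]
        have h1 : |(n:ℝ) - 2*i + 1| ≤ (n:ℝ) - 1 := by
          rw [abs_le]; constructor <;> nlinarith
        nlinarith
      have hc2 : |((n:ℝ) - 2*i - 1) / ((n:ℝ)^2 - 1)| ≤ 1/((n:ℝ)+1) := by
        rw [abs_div, abs_of_pos hden, div_le_div_iff₀ hden hn1]
        have h1 : |(n:ℝ) - 2*i - 1| ≤ (n:ℝ) - 1 := by
          rw [abs_le]; constructor <;> nlinarith
        nlinarith
      calc |lam| * |((n:ℝ) - 2*i + 1)/((n:ℝ)^2-1) * bern (n+1) i x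
            - ((n:ℝ) - 2*i - 1)/((n:ℝ)^2-1) * bern (n+1) (i+1) x|
          ≤ 1 * (|((n:ℝ) - 2*i + 1)/((n:ℝ)^2-1)| * bern (n+1) i x
            + |((n:ℝ) - 2*i - 1)/((n:ℝ)^2-1)| * bern (n+1) (i+1) x) := by
            apply mul_le_mul hlam _ (abs_nonneg _) zero_le_one
            calc _ ≤ |((n:ℝ) - 2*i + 1)/((n:ℝ)^2-1) * bern (n+1) i x|
                + |((n:ℝ) - 2*i - 1)/((n:ℝ)^2-1) * bern (n+1) (i+1) x| := abs_sub _ _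
              _ = _ := by rw [abs_mul, abs_mul, abs_of_nonneg hb1, abs_of_nonneg hb2]
        _ ≤ 1/((n:ℝ)+1) * (bern (n+1) i x + bern (n+1) (i+1) x) := by
            rw [one_mul, mul_add]
            exact add_le_add (mul_le_mul_of_nonneg_right hc1 hb1)
              (mul_le_mul_of_nonneg_right hc2 hb2)

lemma sum_shift_le (n : ℕ) {x : ℝ} (hx : x ∈ Set.Icc (0:ℝ) 1) :
    ∑ i ∈ range (n+1), bern (n+1) (i+1) x ≤ 1 := by
  have h := bern_sum (n+1) x
  rw [Finset.sum_range_succ' (fun j => bern (n+1) j x) (n+1)] at h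
  have h0 : 0 ≤ bern (n+1) 0 x := bern_nonneg hx
  linarith

lemma sum_trunc_le (n : ℕ) {x : ℝ} (hx : x ∈ Set.Icc (0:ℝ) 1) :
    ∑ i ∈ range (n+1), bern (n+1) i x ≤ 1 := by
  have h := bern_sum (n+1) x
  rw [Finset.sum_range_succ (fun j => bern (n+1) j x) (n+1)] at h
  have h0 : 0 ≤ bern (n+1) (n+1) x := bern_nonneg hx
  linarith

lemma sum_abs_bez_sub {n : ℕ} (hn : 2 ≤ n) {lam x : ℝ} (hlam : |lam| ≤ 1)
    (hx : x ∈ Set.Icc (0:ℝ) 1) :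
    ∑ i ∈ range (n+1), |bez n lam x i - bern n i x| ≤ 2/((n:ℝ)+1) := by
  calc ∑ i ∈ range (n+1), |bez n lam x i - bern n i x|
      ≤ ∑ i ∈ range (n+1), (1/((n:ℝ)+1)) * (bern (n+1) i x + bern (n+1) (i+1) x) := by
        apply Finset.sum_le_sum
        intro i hi
        exact bez_sub_bern_abs hn hlam hx (Nat.lt_succ_iff.mp (Finset.mem_range.mp hi))
    _ = (1/((n:ℝ)+1)) * (∑ i ∈ range (n+1), bern (n+1) i x
          + ∑ i ∈ range (n+1), bern (n+1) (i+1) x) := by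
        rw [← Finset.sum_add_distrib, Finset.mul_sum]
    _ ≤ (1/((n:ℝ)+1)) * (1 + 1) := by
        have h1 : (0:ℝ) ≤ 1/((n:ℝ)+1) := by positivity
        exact mul_le_mul_of_nonneg_left (add_le_add (sum_trunc_le n hx) (sum_shift_le n hx)) h1
    _ = 2/((n:ℝ)+1) := by ring

lemma sum_abs_bez {n : ℕ} (hn : 2 ≤ n) {lam x : ℝ} (hlam : |lam| ≤ 1)
    (hx : x ∈ Set.Icc (0:ℝ) 1) :
    ∑ i ∈ range (n+1), |bez n lam x i| ≤ 2 := by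
  have h1 : ∑ i ∈ range (n+1), |bez n lam x i|
      ≤ ∑ i ∈ range (n+1), (bern n i x + |bez n lam x i - bern n i x|) := by
    apply Finset.sum_le_sum
    intro i _
    calc |bez n lam x i| = |bern n i x + (bez n lam x i - bern n i x)| := by
          rw [add_sub_cancel]
      _ ≤ |bern n i x| + |bez n lam x i - bern n i x| := abs_add_le _ _
      _ = bern n i x + |bez n lam x i - bern n i x| := by
          rw [abs_of_nonneg (bern_nonneg hx)]
  rw [Finset.sum_add_distrib, bern_sum] at h1
  have h2 := sum_abs_bez_sub hn hlam hx
  have h3 : 2/((n:ℝ)+1) ≤ 1 := by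
    rw [div_le_one (by positivity)]
    have : (2:ℝ) ≤ (n:ℝ) := by exact_mod_cast hn
    linarith
  linarith

lemma bern_var_le {n : ℕ} (hn : 0 < n) {x : ℝ} (hx : x ∈ Set.Icc (0:ℝ) 1) :
    ∑ i ∈ range (n+1), ((i:ℝ)/n - x)^2 * bern n i x ≤ 1/(4*(n:ℝ)) := by
  rw [bern_variance n hn x]
  have h0 := hx.1
  have h1 := hx.2
  have hnR : (0:ℝ) < (n:ℝ) := by exact_mod_cast hn
  rw [div_le_div_iff₀ hnR (by positivity)]
  nlinarith [mul_nonneg hnR.le (sq_nonneg (2*x-1))]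

lemma classical_est (f : ℝ → ℝ → ℝ) {n m : ℕ} (hn : 0 < n) (hm : 0 < m)
    {x y : ℝ} (hx : x ∈ Set.Icc (0:ℝ) 1) (hy : y ∈ Set.Icc (0:ℝ) 1)
    {e C : ℝ} (hC : 0 ≤ C) (he : 0 ≤ e)
    (key : ∀ u ∈ Set.Icc (0:ℝ) 1, ∀ v ∈ Set.Icc (0:ℝ) 1,
      |f u v - f x y| ≤ e + C*((u-x)^2+(v-y)^2)) :
    |(∑ k₁ ∈ range (n+1), ∑ k₂ ∈ range (m+1),
        f ((k₁:ℝ)/(n:ℝ)) ((k₂:ℝ)/(m:ℝ)) * bern n k₁ x * bern m k₂ y) - f x y|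
      ≤ e + C*(1/(4*(n:ℝ)) + 1/(4*(m:ℝ))) := by
  have hgx : ∀ k ∈ range (n+1), (k:ℝ)/(n:ℝ) ∈ Set.Icc (0:ℝ) 1 := by
    intro k hk
    have hk' : k ≤ n := Nat.lt_succ_iff.mp (Finset.mem_range.mp hk)
    have hnR : (0:ℝ) < (n:ℝ) := by exact_mod_cast hn
    constructor
    · positivity
    · rw [div_le_one hnR]; exact_mod_cast hk'
  have hgy : ∀ k ∈ range (m+1), (k:ℝ)/(m:ℝ) ∈ Set.Icc (0:ℝ) 1 := by
    intro k hk
    have hk' : k ≤ m := Nat.lt_succ_iff.mp (Finset.mem_range.mp hk)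
    have hmR : (0:ℝ) < (m:ℝ) := by exact_mod_cast hm
    constructor
    · positivity
    · rw [div_le_one hmR]; exact_mod_cast hk'
  set Vn := ∑ i ∈ range (n+1), ((i:ℝ)/(n:ℝ) - x)^2 * bern n i x with hVn
  set Vm := ∑ j ∈ range (m+1), ((j:ℝ)/(m:ℝ) - y)^2 * bern m j y with hVm
  have sx := bern_sum n x
  have sy := bern_sum m y
  -- rewrite f x y as a double sum
  have h1 : ∑ k₁ ∈ range (n+1), ∑ k₂ ∈ range (m+1),
      f x y * bern n k₁ x * bern m k₂ y = f x y := by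
    have : ∀ k₁ ∈ range (n+1), ∑ k₂ ∈ range (m+1),
        f x y * bern n k₁ x * bern m k₂ y = f x y * bern n k₁ x := by
      intro k₁ _
      rw [← Finset.mul_sum, sy, mul_one]
    rw [Finset.sum_congr rfl this, ← Finset.mul_sum, sx, mul_one]
  have hdiff : (∑ k₁ ∈ range (n+1), ∑ k₂ ∈ range (m+1),
      f ((k₁:ℝ)/(n:ℝ)) ((k₂:ℝ)/(m:ℝ)) * bern n k₁ x * bern m k₂ y) - f x y
      = ∑ k₁ ∈ range (n+1), ∑ k₂ ∈ range (m+1),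
        (f ((k₁:ℝ)/(n:ℝ)) ((k₂:ℝ)/(m:ℝ)) - f x y) * bern n k₁ x * bern m k₂ y := by
    conv_lhs => rw [← h1]
    rw [← Finset.sum_sub_distrib]
    refine Finset.sum_congr rfl fun k₁ _ => ?_
    rw [← Finset.sum_sub_distrib]
    refine Finset.sum_congr rfl fun k₂ _ => ?_
    ring
  rw [hdiff]
  calc |∑ k₁ ∈ range (n+1), ∑ k₂ ∈ range (m+1),
        (f ((k₁:ℝ)/(n:ℝ)) ((k₂:ℝ)/(m:ℝ)) - f x y) * bern n k₁ x * bern m k₂ y|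
      ≤ ∑ k₁ ∈ range (n+1), ∑ k₂ ∈ range (m+1),
        |(f ((k₁:ℝ)/(n:ℝ)) ((k₂:ℝ)/(m:ℝ)) - f x y) * bern n k₁ x * bern m k₂ y| := by
        refine (Finset.abs_sum_le_sum_abs _ _).trans ?_
        exact Finset.sum_le_sum fun k₁ _ => Finset.abs_sum_le_sum_abs _ _
    _ ≤ ∑ k₁ ∈ range (n+1), ∑ k₂ ∈ range (m+1),
        (e + C*(((k₁:ℝ)/(n:ℝ) - x)^2 + ((k₂:ℝ)/(m:ℝ) - y)^2))
          * bern n k₁ x * bern m k₂ y := by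
        refine Finset.sum_le_sum fun k₁ hk₁ => Finset.sum_le_sum fun k₂ hk₂ => ?_
        rw [abs_mul, abs_mul, abs_of_nonneg (bern_nonneg hx), abs_of_nonneg (bern_nonneg hy)]
        exact mul_le_mul_of_nonneg_right
          (mul_le_mul_of_nonneg_right (key _ (hgx k₁ hk₁) _ (hgy k₂ hk₂)) (bern_nonneg hx))
          (bern_nonneg hy)
    _ = e + C * Vn + C * Vm := by
        have inner : ∀ k₁ ∈ range (n+1), ∑ k₂ ∈ range (m+1),
            (e + C*(((k₁:ℝ)/(n:ℝ) - x)^2 + ((k₂:ℝ)/(m:ℝ) - y)^2))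
              * bern n k₁ x * bern m k₂ y
            = (e + C * ((k₁:ℝ)/(n:ℝ) - x)^2) * bern n k₁ x
              + (C * bern n k₁ x) * Vm := by
          intro k₁ _
          have : ∀ k₂ ∈ range (m+1),
              (e + C*(((k₁:ℝ)/(n:ℝ) - x)^2 + ((k₂:ℝ)/(m:ℝ) - y)^2))
                * bern n k₁ x * bern m k₂ y
              = ((e + C * ((k₁:ℝ)/(n:ℝ) - x)^2) * bern n k₁ x) * bern m k₂ y
                + (C * bern n k₁ x) * (((k₂:ℝ)/(m:ℝ) - y)^2 * bern m k₂ y) := by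
            intro k₂ _; ring
          rw [Finset.sum_congr rfl this, Finset.sum_add_distrib, ← Finset.mul_sum,
            ← Finset.mul_sum, sy, mul_one, ← hVm]
        rw [Finset.sum_congr rfl inner, Finset.sum_add_distrib]
        have : ∀ k₁ ∈ range (n+1),
            (e + C * ((k₁:ℝ)/(n:ℝ) - x)^2) * bern n k₁ x
            = e * bern n k₁ x + C * (((k₁:ℝ)/(n:ℝ) - x)^2 * bern n k₁ x) := by
          intro k₁ _; ring
        rw [Finset.sum_congr rfl this, Finset.sum_add_distrib, ← Finset.mul_sum, sx, mul_one,
          ← Finset.mul_sum, ← hVn]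
        congr 1
        rw [← Finset.sum_mul, ← Finset.mul_sum, sx, mul_one]
    _ ≤ e + C*(1/(4*(n:ℝ)) + 1/(4*(m:ℝ))) := by
        have h1 := bern_var_le hn hx
        have h2 := bern_var_le hm hy
        rw [← hVn] at h1
        rw [← hVm] at h2
        nlinarith [mul_le_mul_of_nonneg_left h1 hC, mul_le_mul_of_nonneg_left h2 hC]

lemma biv_lambda_est (f : ℝ → ℝ → ℝ) {n m : ℕ} (hn : 2 ≤ n) (hm : 2 ≤ m)
    {lam x y : ℝ} (hlam : |lam| ≤ 1)
    (hx : x ∈ Set.Icc (0:ℝ) 1) (hy : y ∈ Set.Icc (0:ℝ) 1)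
    {M : ℝ} (hM0 : 0 ≤ M)
    (hM : ∀ u ∈ Set.Icc (0:ℝ) 1, ∀ v ∈ Set.Icc (0:ℝ) 1, |f u v| ≤ M) :
    |bivB n m lam f x y - ∑ k₁ ∈ range (n+1), ∑ k₂ ∈ range (m+1),
        f ((k₁:ℝ)/(n:ℝ)) ((k₂:ℝ)/(m:ℝ)) * bern n k₁ x * bern m k₂ y|
      ≤ M * (4/((n:ℝ)+1) + 2/((m:ℝ)+1)) := by
  have hgrid : ∀ k₁ ∈ range (n+1), ∀ k₂ ∈ range (m+1),
      |f ((k₁:ℝ)/(n:ℝ)) ((k₂:ℝ)/(m:ℝ))| ≤ M := by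
    intro k₁ hk₁ k₂ hk₂
    have hn0 : 0 < n := by omega
    have hm0 : 0 < m := by omega
    have hnR : (0:ℝ) < (n:ℝ) := by exact_mod_cast hn0
    have hmR : (0:ℝ) < (m:ℝ) := by exact_mod_cast hm0
    apply hM
    · exact ⟨by positivity, by
        rw [div_le_one hnR]
        exact_mod_cast Nat.lt_succ_iff.mp (Finset.mem_range.mp hk₁)⟩
    · exact ⟨by positivity, by
        rw [div_le_one hmR]
        exact_mod_cast Nat.lt_succ_iff.mp (Finset.mem_range.mp hk₂)⟩
  have hdiff : bivB n m lam f x y - ∑ k₁ ∈ range (n+1), ∑ k₂ ∈ range (m+1),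
      f ((k₁:ℝ)/(n:ℝ)) ((k₂:ℝ)/(m:ℝ)) * bern n k₁ x * bern m k₂ y
      = ∑ k₁ ∈ range (n+1), ∑ k₂ ∈ range (m+1),
        f ((k₁:ℝ)/(n:ℝ)) ((k₂:ℝ)/(m:ℝ))
          * (bez n lam x k₁ * bez m lam y k₂ - bern n k₁ x * bern m k₂ y) := by
    unfold bivB
    rw [← Finset.sum_sub_distrib]
    refine Finset.sum_congr rfl fun k₁ _ => ?_
    rw [← Finset.sum_sub_distrib]
    exact Finset.sum_congr rfl fun k₂ _ => by ring
  rw [hdiff]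
  have hfact : M * ((∑ k₁ ∈ range (n+1), |bez n lam x k₁ - bern n k₁ x|)
        * (∑ k₂ ∈ range (m+1), |bez m lam y k₂|)
      + (∑ k₁ ∈ range (n+1), bern n k₁ x)
        * (∑ k₂ ∈ range (m+1), |bez m lam y k₂ - bern m k₂ y|))
      = ∑ k₁ ∈ range (n+1), ∑ k₂ ∈ range (m+1),
        M * (|bez n lam x k₁ - bern n k₁ x| * |bez m lam y k₂|
          + bern n k₁ x * |bez m lam y k₂ - bern m k₂ y|) := by
    rw [Finset.sum_mul_sum, Finset.sum_mul_sum, mul_add, Finset.mul_sum, Finset.mul_sum,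
      ← Finset.sum_add_distrib]
    refine Finset.sum_congr rfl fun k₁ _ => ?_
    rw [Finset.mul_sum, Finset.mul_sum, ← Finset.sum_add_distrib]
    exact Finset.sum_congr rfl fun k₂ _ => by ring
  calc |∑ k₁ ∈ range (n+1), ∑ k₂ ∈ range (m+1),
        f ((k₁:ℝ)/(n:ℝ)) ((k₂:ℝ)/(m:ℝ))
          * (bez n lam x k₁ * bez m lam y k₂ - bern n k₁ x * bern m k₂ y)|
      ≤ ∑ k₁ ∈ range (n+1), ∑ k₂ ∈ range (m+1),
        M * (|bez n lam x k₁ - bern n k₁ x| * |bez m lam y k₂|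
          + bern n k₁ x * |bez m lam y k₂ - bern m k₂ y|) := by
        refine (Finset.abs_sum_le_sum_abs _ _).trans ?_
        refine Finset.sum_le_sum fun k₁ hk₁ => ?_
        refine (Finset.abs_sum_le_sum_abs _ _).trans ?_
        refine Finset.sum_le_sum fun k₂ hk₂ => ?_
        rw [abs_mul]
        have hsplit : |bez n lam x k₁ * bez m lam y k₂ - bern n k₁ x * bern m k₂ y|
            ≤ |bez n lam x k₁ - bern n k₁ x| * |bez m lam y k₂|
              + bern n k₁ x * |bez m lam y k₂ - bern m k₂ y| := by
          have : bez n lam x k₁ * bez m lam y k₂ - bern n k₁ x * bern m k₂ y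
              = (bez n lam x k₁ - bern n k₁ x) * bez m lam y k₂
                + bern n k₁ x * (bez m lam y k₂ - bern m k₂ y) := by ring
          rw [this]
          refine (abs_add_le _ _).trans ?_
          rw [abs_mul, abs_mul, abs_of_nonneg (bern_nonneg hx)]
        exact mul_le_mul (hgrid k₁ hk₁ k₂ hk₂) hsplit (abs_nonneg _) hM0
    _ = M * ((∑ k₁ ∈ range (n+1), |bez n lam x k₁ - bern n k₁ x|)
        * (∑ k₂ ∈ range (m+1), |bez m lam y k₂|)
      + (∑ k₁ ∈ range (n+1), bern n k₁ x)
        * (∑ k₂ ∈ range (m+1), |bez m lam y k₂ - bern m k₂ y|)) := hfact.symm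
    _ ≤ M * (4/((n:ℝ)+1) + 2/((m:ℝ)+1)) := by
        have h1 := sum_abs_bez_sub hn hlam hx
        have h2 := sum_abs_bez hm hlam hy
        have h3 := sum_abs_bez_sub hm hlam hy
        have h4 := bern_sum n x
        rw [h4]
        apply mul_le_mul_of_nonneg_left _ hM0
        have hn1 : (0:ℝ) < (n:ℝ)+1 := by positivity
        have hb1 : 0 ≤ ∑ k₁ ∈ range (n+1), |bez n lam x k₁ - bern n k₁ x| :=
          Finset.sum_nonneg fun i _ => abs_nonneg _
        have hb2 : 0 ≤ ∑ k₂ ∈ range (m+1), |bez m lam y k₂| :=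
          Finset.sum_nonneg fun i _ => abs_nonneg _
        have : (∑ k₁ ∈ range (n+1), |bez n lam x k₁ - bern n k₁ x|)
            * (∑ k₂ ∈ range (m+1), |bez m lam y k₂|) ≤ (2/((n:ℝ)+1)) * 2 :=
          mul_le_mul h1 h2 hb2 (by positivity)
        rw [one_mul]
        have h22 : (2/((n:ℝ)+1)) * 2 = 4/((n:ℝ)+1) := by ring
        linarith [this, h3]


/-- uniform convergence of the bivariate λ-Bernstein operators on
`I = [0,1] × [0,1]`. -/
theorem bivB_uniform_convergence (lam : ℝ) (hlam : lam ∈ Set.Icc (-1 : ℝ) 1)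
    (f : ℝ → ℝ → ℝ)
    (hf : ContinuousOn (Function.uncurry f) (Set.Icc (0 : ℝ) 1 ×ˢ Set.Icc (0 : ℝ) 1)) :
    ∀ ε > (0 : ℝ), ∃ N : ℕ, ∀ n ≥ N, ∀ m ≥ N,
      ∀ x ∈ Set.Icc (0 : ℝ) 1, ∀ y ∈ Set.Icc (0 : ℝ) 1,
        |bivB n m lam f x y - f x y| < ε := by
  intro ε hε
  have hlam' : |lam| ≤ 1 := abs_le.mpr ⟨hlam.1, hlam.2⟩
  have hKc : IsCompact (Set.Icc (0 : ℝ) 1 ×ˢ Set.Icc (0 : ℝ) 1) :=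
    isCompact_Icc.prod isCompact_Icc
  obtain ⟨M₀, hM₀⟩ := hKc.exists_bound_of_continuousOn hf
  set M := max M₀ 1 with hMdef
  have hM1 : (1:ℝ) ≤ M := le_max_right _ _
  have hMpos : (0:ℝ) < M := lt_of_lt_of_le one_pos hM1
  have hMb : ∀ u ∈ Set.Icc (0:ℝ) 1, ∀ v ∈ Set.Icc (0:ℝ) 1, |f u v| ≤ M := by
    intro u hu v hv
    have h := hM₀ (u, v) (Set.mk_mem_prod hu hv)
    calc |f u v| = ‖Function.uncurry f (u, v)‖ := by simp [Function.uncurry]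
      _ ≤ M₀ := h
      _ ≤ M := le_max_left _ _
  have huc := hKc.uniformContinuousOn_of_continuous hf
  rw [Metric.uniformContinuousOn_iff] at huc
  obtain ⟨δ, hδ, hδ'⟩ := huc (ε/4) (by linarith)
  set C := 2*M/δ^2 with hCdef
  have hCpos : 0 < C := by positivity
  have key : ∀ x ∈ Set.Icc (0:ℝ) 1, ∀ y ∈ Set.Icc (0:ℝ) 1,
      ∀ u ∈ Set.Icc (0:ℝ) 1, ∀ v ∈ Set.Icc (0:ℝ) 1,
      |f u v - f x y| ≤ ε/4 + C*((u-x)^2+(v-y)^2) := by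
    intro x hx y hy u hu v hv
    by_cases h : dist ((u,v) : ℝ × ℝ) ((x,y) : ℝ × ℝ) < δ
    · have hd := hδ' (u, v) (Set.mk_mem_prod hu hv) (x, y) (Set.mk_mem_prod hx hy) h
      have : |f u v - f x y| < ε/4 := by
        rw [Real.dist_eq] at hd
        exact hd
      have hnn : 0 ≤ C*((u-x)^2+(v-y)^2) := by positivity
      linarith
    · push_neg at h
      rw [Prod.dist_eq] at h
      have hδ2 : δ^2 ≤ (u-x)^2 + (v-y)^2 := by
        rcases max_cases (dist u x) (dist v y) with ⟨heq, _⟩ | ⟨heq, _⟩ <;>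
          rw [heq, Real.dist_eq] at h
        · have : δ^2 ≤ (u-x)^2 := by
            rw [← sq_abs (u - x)]
            exact pow_le_pow_left₀ hδ.le h 2
          nlinarith [sq_nonneg (v - y)]
        · have : δ^2 ≤ (v-y)^2 := by
            rw [← sq_abs (v - y)]
            exact pow_le_pow_left₀ hδ.le h 2
          nlinarith [sq_nonneg (u - x)]
      have h2M : |f u v - f x y| ≤ 2*M := by
        calc |f u v - f x y| ≤ |f u v| + |f x y| := abs_sub _ _
          _ ≤ M + M := add_le_add (hMb u hu v hv) (hMb x hx y hy)
          _ = 2*M := by ring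
      have : 2*M = C * δ^2 := by
        rw [hCdef]; field_simp
      have hCs : C * δ^2 ≤ C * ((u-x)^2+(v-y)^2) := by
        exact mul_le_mul_of_nonneg_left hδ2 hCpos.le
      linarith
  obtain ⟨N, hN⟩ := exists_nat_gt (max 2 ((6*M + M/δ^2) / (ε/2)))
  refine ⟨N, ?_⟩
  intro n hn m hm x hx y hy
  have hNR2 : (2:ℝ) < (N:ℝ) := lt_of_le_of_lt (le_max_left _ _) hN
  have hNn : 2 ≤ N := by exact_mod_cast hNR2.le
  have hNpos : (0:ℝ) < (N:ℝ) := by linarith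
  have hn2 : 2 ≤ n := le_trans hNn hn
  have hm2 : 2 ≤ m := le_trans hNn hm
  have hn0 : 0 < n := by omega
  have hm0 : 0 < m := by omega
  have hnN : (N:ℝ) ≤ (n:ℝ) := by exact_mod_cast hn
  have hmN : (N:ℝ) ≤ (m:ℝ) := by exact_mod_cast hm
  have e1 := biv_lambda_est f hn2 hm2 hlam' hx hy hMpos.le hMb
  have e2 := classical_est f hn0 hm0 hx hy hCpos.le (by linarith : (0:ℝ) ≤ ε/4)
    (key x hx y hy)
  have tri := abs_sub_le (bivB n m lam f x y)
    (∑ k₁ ∈ range (n+1), ∑ k₂ ∈ range (m+1),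
      f ((k₁:ℝ)/(n:ℝ)) ((k₂:ℝ)/(m:ℝ)) * bern n k₁ x * bern m k₂ y) (f x y)
  have b1 : M*(4/((n:ℝ)+1) + 2/((m:ℝ)+1)) ≤ 6*M/(N:ℝ) := by
    have h4 : 4/((n:ℝ)+1) ≤ 4/(N:ℝ) := by
      apply div_le_div_of_nonneg_left (by norm_num) hNpos (by linarith)
    have h2 : 2/((m:ℝ)+1) ≤ 2/(N:ℝ) := by
      apply div_le_div_of_nonneg_left (by norm_num) hNpos (by linarith)
    have : 4/((n:ℝ)+1) + 2/((m:ℝ)+1) ≤ 6/(N:ℝ) := by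
      have : 4/(N:ℝ) + 2/(N:ℝ) = 6/(N:ℝ) := by ring
      linarith
    calc M*(4/((n:ℝ)+1) + 2/((m:ℝ)+1)) ≤ M*(6/(N:ℝ)) :=
          mul_le_mul_of_nonneg_left this hMpos.le
      _ = 6*M/(N:ℝ) := by ring
  have b2 : C*(1/(4*(n:ℝ)) + 1/(4*(m:ℝ))) ≤ C*(1/(2*(N:ℝ))) := by
    apply mul_le_mul_of_nonneg_left _ hCpos.le
    have h4 : 1/(4*(n:ℝ)) ≤ 1/(4*(N:ℝ)) := by
      apply div_le_div_of_nonneg_left (by norm_num) (by linarith) (by linarith)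
    have h5 : 1/(4*(m:ℝ)) ≤ 1/(4*(N:ℝ)) := by
      apply div_le_div_of_nonneg_left (by norm_num) (by linarith) (by linarith)
    have : 1/(4*(N:ℝ)) + 1/(4*(N:ℝ)) = 1/(2*(N:ℝ)) := by
      field_simp
      ring
    linarith
  have hglue : 6*M/(N:ℝ) + C*(1/(2*(N:ℝ))) = (6*M + M/δ^2)/(N:ℝ) := by
    rw [hCdef]
    field_simp
  have hA : (6*M + M/δ^2)/(ε/2) < (N:ℝ) := lt_of_le_of_lt (le_max_right _ _) hN
  have h6 : (6*M + M/δ^2)/(N:ℝ) < ε/2 := by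
    rw [div_lt_iff₀ hNpos]
    rw [div_lt_iff₀ (by linarith : (0:ℝ) < ε/2)] at hA
    nlinarith
  calc |bivB n m lam f x y - f x y|
      ≤ M*(4/((n:ℝ)+1) + 2/((m:ℝ)+1)) + (ε/4 + C*(1/(4*(n:ℝ)) + 1/(4*(m:ℝ)))) := by
        unfold bivB at e1 tri ⊢
        linarith [tri, e1, e2]
    _ ≤ 6*M/(N:ℝ) + (ε/4 + C*(1/(2*(N:ℝ)))) := by linarith
    _ = ε/4 + (6*M + M/δ^2)/(N:ℝ) := by linarith [hglue]
    _ < ε/4 + ε/2 := by linarith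
    _ < ε := by linarith
end
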